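/- Let 𝔄 be an abelian category. For any two objects E^{•,•}, F^{•,•} of 𝔄^Π, there is a natural isomorphism Hom_{S⁻¹𝔄^Π}(E^{•,•}, F^{•,•}) ≅ colim_{φ ∈ M} Hom_{𝔄^Π}(φ̃E^{•,•}, F^{•,•}), where the colimit is over the directed set M ordered by φ ≤ φ' iff φ ≥ φ' pointwise (transition maps induced by the canonical morphisms φ̃'E → φ̃E). -/

import Mathlib

open CategoryTheory CategoryTheory.Limits

universe v u

/-- `Π = {(a,b) ∈ ℤ² : a ≤ b}` with the reverse componentwise order. -/
structure PiSet : Type where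
  a : ℤ
  b : ℤ
  le_ab : a ≤ b

instance : PartialOrder PiSet where
  le x y := y.a ≤ x.a ∧ y.b ≤ x.b
  le_refl x := ⟨le_refl _, le_refl _⟩
  le_trans x y z h h' := ⟨h'.1.trans h.1, h'.2.trans h.2⟩
  le_antisymm x y h h' := by
    cases x; cases y
    simp only [PiSet.mk.injEq]
    exact ⟨le_antisymm h'.1 h.1, le_antisymm h'.2 h.2⟩

variable {𝔄 : Type u} [Category.{v} 𝔄] [Abelian 𝔄]

/-- An object `E` of `𝔄^Π` is *admissible* if for all `a ≤ b ≤ c` the sequence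
`0 → E^{b,c} → E^{a,c} → E^{a,b} → 0` (given by the transition maps) is short exact. -/
def Admissible (E : PiSet ⥤ 𝔄) : Prop :=
  ∀ (a b c : ℤ) (hab : a ≤ b) (hbc : b ≤ c),
    ∃ w : E.map (homOfLE (show (⟨b, c, hbc⟩ : PiSet) ≤ ⟨a, c, hab.trans hbc⟩ from
            ⟨hab, le_refl c⟩)) ≫
          E.map (homOfLE (show (⟨a, c, hab.trans hbc⟩ : PiSet) ≤ ⟨a, b, hab⟩ from
            ⟨le_refl a, hbc⟩)) = 0,
      (ShortComplex.mk _ _ w).ShortExact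

/-- `M`: order-preserving maps `ℤ → ℤ` tending to `±∞` at `±∞`. -/
def inM (φ : ℤ → ℤ) : Prop :=
  Monotone φ ∧ Filter.Tendsto φ Filter.atTop Filter.atTop ∧
    Filter.Tendsto φ Filter.atBot Filter.atBot

/-- The diagram `φ̃(E)` with `φ̃(E)^{a,b} = E^{φ(a),φ(b)}`. -/
def tilde (φ : ℤ → ℤ) (hφ : Monotone φ) (E : PiSet ⥤ 𝔄) : PiSet ⥤ 𝔄 where
  obj p := E.obj ⟨φ p.a, φ p.b, hφ p.le_ab⟩
  map {p q} h := E.map (homOfLE ⟨hφ (leOfHom h).1, hφ (leOfHom h).2⟩)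
  map_id p := by
    rw [← E.map_id]
    exact congrArg E.map (Subsingleton.elim _ _)
  map_comp f g := by
    rw [← E.map_comp]
    exact congrArg E.map (Subsingleton.elim _ _)

/-- The canonical morphism `φ̃(E) → ψ̃(E)` for `φ ≥ ψ` pointwise, given by transition maps. -/
def canMap (φ ψ : ℤ → ℤ) (hφ : Monotone φ) (hψ : Monotone ψ) (h : ∀ i, ψ i ≤ φ i)
    (E : PiSet ⥤ 𝔄) : tilde φ hφ E ⟶ tilde ψ hψ E where
  app p := E.map (homOfLE ⟨h _, h _⟩)
  naturality p q f := by
    dsimp [tilde]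
    rw [← E.map_comp, ← E.map_comp]
    exact congrArg E.map (Subsingleton.elim _ _)

/-- The class `S` of canonical morphisms `φ̃(E) → ψ̃(E)` for `φ ≥ ψ` in `M`. -/
def Scl : MorphismProperty (PiSet ⥤ 𝔄) := fun X Y f =>
  ∃ (E : PiSet ⥤ 𝔄) (φ ψ : ℤ → ℤ) (hφ : inM φ) (hψ : inM ψ) (h : ∀ i, ψ i ≤ φ i)
    (hX : X = tilde φ hφ.1 E) (hY : Y = tilde ψ hψ.1 E),
    f = eqToHom hX ≫ canMap φ ψ hφ.1 hψ.1 h E ≫ eqToHom hY.symm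

/-- `N(𝔄)`: the objects of `𝔄^Π` which become zero in the localization `S⁻¹𝔄^Π`. -/
def Nsub (E : PiSet ⥤ 𝔄) : Prop :=
  CategoryTheory.Limits.IsZero ((Scl (𝔄 := 𝔄)).Q.obj E)

lemma inM_id : inM (id : ℤ → ℤ) :=
  ⟨monotone_id, Filter.tendsto_id, Filter.tendsto_id⟩

lemma inM_max_id (φ : ℤ → ℤ) (hφ : inM φ) : inM (fun i => max (φ i) i) :=
  ⟨hφ.1.max monotone_id,
    Filter.tendsto_atTop_mono (fun i => le_max_right _ _) Filter.tendsto_id,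
    Filter.tendsto_atBot.2 (fun b => by
      filter_upwards [hφ.2.2.eventually_le_atBot b, Filter.eventually_le_atBot b] with i h1 h2
      exact max_le h1 h2)⟩

lemma scl_canMap (φ ψ : ℤ → ℤ) (hφ : inM φ) (hψ : inM ψ) (h : ∀ i, ψ i ≤ φ i)
    (E : PiSet ⥤ 𝔄) : Scl (canMap φ ψ hφ.1 hψ.1 h E) :=
  ⟨E, φ, ψ, hφ, hψ, h, rfl, rfl, by simp⟩

/-- The canonical isomorphism `E ≅ ĩd(E)`. -/
def idIso (E : PiSet ⥤ 𝔄) : E ≅ tilde id monotone_id E where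
  hom :=
    { app := fun p => 𝟙 (E.obj p)
      naturality := by
        intro p q f
        dsimp [tilde]
        simp only [Category.comp_id, Category.id_comp]
        exact congrArg E.map (Subsingleton.elim _ _) }
  inv :=
    { app := fun p => 𝟙 (E.obj p)
      naturality := by
        intro p q f
        dsimp [tilde]
        simp only [Category.comp_id, Category.id_comp]
        exact congrArg E.map (Subsingleton.elim _ _) }
  hom_inv_id := by ext p; first | exact Category.comp_id _ | simp [tilde]
  inv_hom_id := by ext p; first | exact Category.comp_id _ | simp [tilde]

/-- The canonical map `Hom_{𝔄^Π}(φ̃E, F) → Hom_{S⁻¹𝔄^Π}(E, F)`: compose in the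
localization with the formal inverse of the canonical morphism `χ̃E → ĩdE ≅ E`
(`χ = max (φ, id)`) followed by the canonical morphism `χ̃E → φ̃E`. -/
noncomputable def theta (E F : PiSet ⥤ 𝔄) (φ : ℤ → ℤ) (hφ : inM φ)
    (u : tilde φ hφ.1 E ⟶ F) :
    (Scl (𝔄 := 𝔄)).Q.obj E ⟶ (Scl (𝔄 := 𝔄)).Q.obj F :=
  ((Scl (𝔄 := 𝔄)).Q.mapIso (idIso E)).hom ≫
    (Localization.Construction.wIso
      (canMap (fun i => max (φ i) i) id (inM_max_id φ hφ).1 monotone_id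
        (fun i => le_max_right _ _) E)
      (scl_canMap _ _ (inM_max_id φ hφ) inM_id _ E)).inv ≫
    (Scl (𝔄 := 𝔄)).Q.map
      (canMap (fun i => max (φ i) i) φ (inM_max_id φ hφ).1 hφ.1 (fun i => le_max_left _ _) E) ≫
    (Scl (𝔄 := 𝔄)).Q.map u

/-! The canonical maps `χ̃(E) → E` with `id ≤ χ` in `M` already generate the localization: given
`ψ ≤ φ` in `M`, pick `ρ, σ ≥ id` in `M` with `φ ≤ ψ ∘ ρ ≤ φ ∘ σ`; the composites
`(φ ∘ σ)~E → (ψ ∘ ρ)~E → φ̃E` and `(ψ ∘ ρ)~E → φ̃E → ψ̃E` are such maps, for `φ̃E` and `ψ̃E`,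
so two-out-of-six inverts `φ̃E → ψ̃E`. Since reindexing along `χ` is functorial and the maps
`χ̃(E) → E` are natural in `E`, they admit a right calculus of fractions. Hence each morphism
`E → F` of `S⁻¹𝔄^Π` is `Q(u) ∘ Q(s)⁻¹` with `s : χ̃E → E`, and two morphisms out of `φ̃E` become
equal in `S⁻¹𝔄^Π` iff they agree after precomposing with some `s`: this is the filtered colimit. -/

lemma inM.monotone {φ : ℤ → ℤ} (hφ : inM φ) : Monotone φ :=
  hφ.1

lemma inM_comp {φ ψ : ℤ → ℤ} (hφ : inM φ) (hψ : inM ψ) : inM (ψ ∘ φ) :=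
  ⟨hψ.monotone.comp hφ.monotone, hψ.2.1.comp hφ.2.1, hψ.2.2.comp hφ.2.2⟩

lemma inM_max {φ ψ : ℤ → ℤ} (hφ : inM φ) (hψ : inM ψ) : inM (fun i => max (φ i) (ψ i)) :=
  ⟨hφ.monotone.max hψ.monotone, Filter.tendsto_atTop_mono (fun _ => le_max_left _ _) hφ.2.1,
    Filter.tendsto_sup_atBot _ hφ.2.2 hψ.2.2⟩

lemma exists_inM_upperBound {φ ψ : ℤ → ℤ} (hφ : inM φ) (hψ : inM ψ) :
    ∃ γ : ℤ → ℤ, inM γ ∧ (∀ i, i ≤ γ i) ∧ (∀ i, φ i ≤ γ i) ∧ ∀ i, ψ i ≤ γ i :=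
  ⟨_, inM_max_id _ (inM_max hφ hψ), fun _ => le_max_right _ _,
    fun _ => (le_max_left _ _).trans (le_max_left _ _),
    fun _ => (le_max_right _ _).trans (le_max_left _ _)⟩

/-- `ρ i` is the least `z ≥ i` with `φ i ≤ ψ z`. -/
lemma exists_inM_le_comp {φ ψ : ℤ → ℤ} (hφ : inM φ) (hψ : inM ψ) :
    ∃ ρ : ℤ → ℤ, inM ρ ∧ (∀ i, i ≤ ρ i) ∧ ∀ i, φ i ≤ ψ (ρ i) := by
  have hleast : ∀ i, ∃ z, (i ≤ z ∧ φ i ≤ ψ z) ∧ ∀ y, i ≤ y ∧ φ i ≤ ψ y → z ≤ y := by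
    intro i
    obtain ⟨n, hn⟩ := Filter.eventually_atTop.1 (hψ.2.1.eventually_ge_atTop (φ i))
    exact Int.exists_least_of_bdd ⟨i, fun y hy => hy.1⟩
      ⟨max i n, le_max_left _ _, hn _ (le_max_right _ _)⟩
  choose ρ hρ hmin using hleast
  refine ⟨ρ, ⟨fun i j hij => hmin i (ρ j) ⟨hij.trans (hρ j).1, (hφ.monotone hij).trans (hρ j).2⟩,
    Filter.tendsto_atTop_mono (fun i => (hρ i).1) Filter.tendsto_id, ?_⟩,
    fun i => (hρ i).1, fun i => (hρ i).2⟩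
  refine Filter.tendsto_atBot.2 fun b => ?_
  filter_upwards [hφ.2.2.eventually_le_atBot (ψ b), Filter.eventually_le_atBot b] with i h1 h2
  exact hmin i b ⟨h2, h1⟩

section

variable {C : Type*} [Category* C]

section canMap

variable {φ ψ χ : ℤ → ℤ} {hφ : Monotone φ} {hψ : Monotone ψ} {hχ : Monotone χ}

lemma canMap_comp (h₁ : ∀ i, ψ i ≤ φ i) (h₂ : ∀ i, χ i ≤ ψ i) (E : PiSet ⥤ C) :
    canMap φ ψ hφ hψ h₁ E ≫ canMap ψ χ hψ hχ h₂ E =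
      canMap φ χ hφ hχ (fun i => (h₂ i).trans (h₁ i)) E := by
  ext p
  exact (E.map_comp _ _).symm

lemma canMap_self (h : ∀ i, φ i ≤ φ i) (E : PiSet ⥤ C) : canMap φ φ hφ hφ h E = 𝟙 _ := by
  ext p
  exact E.map_id _

/-- `canMap χ id` with its target `ĩd(E)` written as `E`, which it equals only up to unfolding.
Likewise `canMapId ρ _ _ (ψ̃ E)` unfolds to `canMap (ψ ∘ ρ) ψ _ _ _ E`. -/
def canMapId (χ : ℤ → ℤ) (hχ : Monotone χ) (h : ∀ i, i ≤ χ i) (E : PiSet ⥤ C) :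
    tilde χ hχ E ⟶ E :=
  canMap χ id hχ monotone_id h E

lemma canMap_comp_canMapId (h₁ : ∀ i, ψ i ≤ φ i) (h₂ : ∀ i, i ≤ ψ i) (E : PiSet ⥤ C) :
    canMap φ ψ hφ hψ h₁ E ≫ canMapId ψ hψ h₂ E = canMapId φ hφ (fun i => (h₂ i).trans (h₁ i)) E :=
  canMap_comp h₁ h₂ E

def tildeMap (χ : ℤ → ℤ) (hχ : Monotone χ) {X Y : PiSet ⥤ C} (f : X ⟶ Y) :
    tilde χ hχ X ⟶ tilde χ hχ Y where
  app _ := f.app _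
  naturality _ _ _ := f.naturality _

lemma tildeMap_comp {X Y Z : PiSet ⥤ C} (f : X ⟶ Y) (g : Y ⟶ Z) :
    tildeMap χ hχ (f ≫ g) = tildeMap χ hχ f ≫ tildeMap χ hχ g :=
  rfl

lemma tildeMap_canMapId (h : ∀ i, i ≤ χ i) (E : PiSet ⥤ C) :
    tildeMap χ hχ (canMapId χ hχ h E) = canMapId χ hχ h (tilde χ hχ E) :=
  rfl

lemma canMapId_naturality (h : ∀ i, i ≤ χ i) {X Y : PiSet ⥤ C} (f : X ⟶ Y) :
    canMapId χ hχ h X ≫ f = tildeMap χ hχ f ≫ canMapId χ hχ h Y := by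
  ext p
  exact f.naturality _

end canMap

def SclId : MorphismProperty (PiSet ⥤ C) :=
  MorphismProperty.ofHoms fun p : {χ : ℤ → ℤ // inM χ ∧ ∀ i, i ≤ χ i} × (PiSet ⥤ C) =>
    canMapId p.1.1 p.1.2.1.monotone p.1.2.2 p.2

lemma sclId_canMapId {χ : ℤ → ℤ} (hχ : inM χ) (h : ∀ i, i ≤ χ i) (E : PiSet ⥤ C) :
    SclId (canMapId χ hχ.monotone h E) :=
  MorphismProperty.ofHoms.mk (⟨⟨χ, hχ, h⟩, E⟩ : {χ : ℤ → ℤ // inM χ ∧ ∀ i, i ≤ χ i} × (PiSet ⥤ C))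

lemma sclId_le_scl : SclId (C := C) ≤ Scl := by
  rintro _ _ _ ⟨⟨⟨χ, hχ, h⟩, E⟩⟩
  have : Scl (canMap χ id hχ.monotone monotone_id h E) :=
    ⟨E, χ, id, hχ, inM_id, h, rfl, rfl, by simp⟩
  exact this

instance : (SclId (C := C)).IsMultiplicative where
  id_mem X := by
    have := sclId_canMapId inM_id (fun _ => le_rfl) X
    rwa [canMapId, canMap_self] at this
  comp_mem := by
    rintro _ _ _ _ _ ⟨⟨⟨χ, hχ, h⟩, _⟩⟩ ⟨⟨⟨δ, hδ, h'⟩, Z⟩⟩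
    have := sclId_canMapId (inM_comp hχ hδ) (fun i => (h' i).trans (hδ.monotone (h i))) Z
    rw [← canMap_comp_canMapId (φ := δ ∘ χ) (hψ := hδ.monotone) (fun i => hδ.monotone (h i)) h']
      at this
    exact this

instance : (SclId (C := C)).HasRightCalculusOfFractions where
  exists_rightFraction := by
    rintro X₀ _ ⟨f, _, ⟨⟨⟨χ, hχ, h⟩, _⟩⟩⟩
    exact ⟨⟨canMapId χ hχ.monotone h X₀, sclId_canMapId hχ h X₀, tildeMap χ hχ.monotone f⟩,
      canMapId_naturality h f⟩
  ext := by
    rintro X₀ _ _ f₁ f₂ _ ⟨⟨⟨χ, hχ, h⟩, Y'⟩⟩ hfs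
    refine ⟨_, canMapId χ hχ.monotone h X₀, sclId_canMapId hχ h X₀, ?_⟩
    rw [canMapId_naturality h f₁, canMapId_naturality h f₂, ← tildeMap_canMapId h Y',
      ← tildeMap_comp, ← tildeMap_comp, hfs]

lemma isIso_of_isIso_comp_of_isIso_comp {D : Type*} [Category* D] {W X Y Z : D}
    (t : W ⟶ X) (r : X ⟶ Y) (s : Y ⟶ Z) [IsIso (r ≫ s)] [IsIso (t ≫ r)] : IsIso r := by
  have : Mono r := mono_of_mono r s
  have : IsSplitEpi r := IsSplitEpi.mk' ⟨inv (t ≫ r) ≫ t, by simp⟩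
  exact isIso_of_mono_of_isSplitEpi r

lemma scl_isInvertedBy_of_sclId {D : Type*} [Category* D] {G : (PiSet ⥤ C) ⥤ D}
    (hG : (SclId (C := C)).IsInvertedBy G) : (Scl (𝔄 := C)).IsInvertedBy G := by
  rintro _ _ _ ⟨E, φ, ψ, hφ, hψ, hle, rfl, rfl, rfl⟩
  simp only [eqToHom_refl, Category.id_comp, Category.comp_id]
  obtain ⟨ρ, hρ, hρid, hφρ⟩ := exists_inM_le_comp hφ hψ
  obtain ⟨σ, hσ, hσid, hρσ⟩ := exists_inM_le_comp (inM_comp hρ hψ) hφ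
  let s := canMap φ ψ hφ.monotone hψ.monotone hle E
  let r := canMap (ψ ∘ ρ) φ (inM_comp hρ hψ).monotone hφ.monotone hφρ E
  let t := canMap (φ ∘ σ) (ψ ∘ ρ) (inM_comp hσ hφ).monotone (inM_comp hρ hψ).monotone hρσ E
  have : IsIso (G.map r ≫ G.map s) := by
    rw [← G.map_comp, canMap_comp]
    exact hG _ (sclId_canMapId hρ hρid (tilde ψ hψ.monotone E))
  have : IsIso (G.map t ≫ G.map r) := by
    rw [← G.map_comp, canMap_comp]
    exact hG _ (sclId_canMapId hσ hσid (tilde φ hφ.monotone E))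
  have := isIso_of_isIso_comp_of_isIso_comp (G.map t) (G.map r) (G.map s)
  exact IsIso.of_isIso_comp_left (G.map r) (G.map s)

noncomputable def sclStrictUniversalProperty (D : Type*) [Category* D] :
    Localization.StrictUniversalPropertyFixedTarget Scl.Q (SclId (C := C)) D where
  inverts _ _ f hf := Scl.Q_inverts f (sclId_le_scl _ hf)
  lift G hG := Localization.Construction.lift G (scl_isInvertedBy_of_sclId hG)
  fac G _ := Localization.Construction.fac G _
  uniq := Localization.Construction.uniq

instance : (Scl (𝔄 := C)).Q.IsLocalization (SclId (C := C)) :=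
  Functor.IsLocalization.mk' _ _ (sclStrictUniversalProperty _) (sclStrictUniversalProperty _)

lemma isIso_map_canMapId {χ : ℤ → ℤ} (hχ : inM χ) (h : ∀ i, i ≤ χ i) (E : PiSet ⥤ C) :
    IsIso (Scl.Q.map (canMapId χ hχ.monotone h E)) :=
  Scl.Q_inverts _ (sclId_le_scl _ (sclId_canMapId hχ h E))

lemma exists_map_canMapId_comp_eq {E F : PiSet ⥤ C} (g : Scl.Q.obj E ⟶ Scl.Q.obj F) :
    ∃ (χ : ℤ → ℤ) (hχ : inM χ) (hid : ∀ i, i ≤ χ i) (u : tilde χ hχ.monotone E ⟶ F),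
      Scl.Q.map (canMapId χ hχ.monotone hid E) ≫ g = Scl.Q.map u := by
  obtain ⟨φ, rfl⟩ := Localization.exists_rightFraction Scl.Q SclId g
  have hφ := φ.map_s_comp_map Scl.Q (Localization.inverts _ _)
  obtain ⟨_, ⟨⟨⟨χ, hχ, hid⟩, _⟩⟩, u⟩ := φ
  exact ⟨χ, hχ, hid, u, hφ⟩

lemma exists_canMapId_comp_eq_of_map_eq {Y Z : PiSet ⥤ C} {f₁ f₂ : Y ⟶ Z}
    (h : Scl.Q.map f₁ = Scl.Q.map f₂) :
    ∃ (δ : ℤ → ℤ) (hδ : inM δ) (hid : ∀ i, i ≤ δ i),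
      canMapId δ hδ.monotone hid Y ≫ f₁ = canMapId δ hδ.monotone hid Y ≫ f₂ := by
  obtain ⟨_, _, ⟨⟨⟨δ, hδ, hid⟩, _⟩⟩, hs⟩ :=
    (MorphismProperty.map_eq_iff_precomp Scl.Q SclId f₁ f₂).1 h
  exact ⟨δ, hδ, hid, hs⟩

end

lemma map_canMapId_comp_theta (E F : PiSet ⥤ 𝔄) {φ χ : ℤ → ℤ} (hφ : inM φ) (hχ : inM χ)
    (hid : ∀ i, i ≤ χ i) (hle : ∀ i, φ i ≤ χ i) (u : tilde φ hφ.monotone E ⟶ F) :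
    Scl.Q.map (canMapId χ hχ.monotone hid E) ≫ theta E F φ hφ u =
      Scl.Q.map (canMap χ φ hχ.monotone hφ.monotone hle E ≫ u) := by
  have hχ₀ := inM_max_id φ hφ
  have hbase : Scl.Q.map (canMapId _ hχ₀.monotone (fun _ => le_max_right _ _) E) ≫
      theta E F φ hφ u =
        Scl.Q.map (canMap _ φ hχ₀.monotone hφ.monotone (fun _ => le_max_left _ _) E ≫ u) := by
    rw [theta, Functor.mapIso_hom, ← Category.assoc, ← Functor.map_comp,
      show canMapId _ _ _ E ≫ (idIso E).hom = canMap _ id _ monotone_id _ E from Category.comp_id _]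
    erw [(Localization.Construction.wIso _
      (scl_canMap _ _ hχ₀ inM_id (fun _ => le_max_right _ _) E)).hom_inv_id_assoc]
    rw [Functor.map_comp]
  rw [← canMap_comp_canMapId (hψ := hχ₀.monotone) (fun i => max_le (hle i) (hid i))
      (fun _ => le_max_right _ _),
    Functor.map_comp, Category.assoc, hbase, ← Functor.map_comp, ← Category.assoc, canMap_comp]

lemma theta_canMap_comp (E F : PiSet ⥤ 𝔄) {φ ψ : ℤ → ℤ} (hφ : inM φ) (hψ : inM ψ)
    (h : ∀ i, ψ i ≤ φ i) (u : tilde ψ hψ.monotone E ⟶ F) :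
    theta E F φ hφ (canMap φ ψ hφ.monotone hψ.monotone h E ≫ u) = theta E F ψ hψ u := by
  obtain ⟨γ, hγ, hγid, hγφ, hγψ⟩ := exists_inM_upperBound hφ hψ
  have := isIso_map_canMapId hγ hγid E
  rw [← cancel_epi (Scl.Q.map (canMapId γ hγ.monotone hγid E)),
    map_canMapId_comp_theta E F hφ hγ hγid hγφ, map_canMapId_comp_theta E F hψ hγ hγid hγψ,
    ← Category.assoc, canMap_comp]

lemma exists_theta_eq (E F : PiSet ⥤ 𝔄) (g : Scl.Q.obj E ⟶ Scl.Q.obj F) :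
    ∃ (φ : ℤ → ℤ) (hφ : inM φ) (u : tilde φ hφ.monotone E ⟶ F), theta E F φ hφ u = g := by
  obtain ⟨χ, hχ, hid, u, hu⟩ := exists_map_canMapId_comp_eq g
  refine ⟨χ, hχ, u, ?_⟩
  have := isIso_map_canMapId hχ hid E
  rw [← cancel_epi (Scl.Q.map (canMapId χ hχ.monotone hid E)),
    map_canMapId_comp_theta E F hχ hχ hid (fun _ => le_rfl), canMap_self, Category.id_comp, hu]

lemma exists_canMap_comp_eq_of_theta_eq (E F : PiSet ⥤ 𝔄) {φ ψ : ℤ → ℤ} (hφ : inM φ)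
    (hψ : inM ψ) (u : tilde φ hφ.monotone E ⟶ F) (v : tilde ψ hψ.monotone E ⟶ F)
    (huv : theta E F φ hφ u = theta E F ψ hψ v) :
    ∃ (χ : ℤ → ℤ) (hχ : inM χ) (h₁ : ∀ i, φ i ≤ χ i) (h₂ : ∀ i, ψ i ≤ χ i),
      canMap χ φ hχ.monotone hφ.monotone h₁ E ≫ u =
        canMap χ ψ hχ.monotone hψ.monotone h₂ E ≫ v := by
  obtain ⟨γ, hγ, hγid, hγφ, hγψ⟩ := exists_inM_upperBound hφ hψ
  obtain ⟨δ, hδ, hδid, hδγ⟩ := exists_canMapId_comp_eq_of_map_eq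
    (f₁ := canMap γ φ hγ.monotone hφ.monotone hγφ E ≫ u)
    (f₂ := canMap γ ψ hγ.monotone hψ.monotone hγψ E ≫ v) (by
      rw [← map_canMapId_comp_theta E F hφ hγ hγid hγφ,
        ← map_canMapId_comp_theta E F hψ hγ hγid hγψ, huv])
  have hγδ : ∀ i, γ i ≤ γ (δ i) := fun i => hγ.monotone (hδid i)
  refine ⟨γ ∘ δ, inM_comp hδ hγ, fun i => (hγφ i).trans (hγδ i),
    fun i => (hγψ i).trans (hγδ i), ?_⟩
  rw [← canMap_comp (φ := γ ∘ δ) (hψ := hγ.monotone) hγδ hγφ,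
    ← canMap_comp (φ := γ ∘ δ) (hψ := hγ.monotone) hγδ hγψ,
    Category.assoc, Category.assoc]
  exact hδγ

/-- The three conjuncts say that the maps `theta` form a cocone on `φ ↦ Hom(φ̃E, F)` which is
jointly surjective and identifies exactly the elements that agree on a common refinement, i.e.
that they induce a bijection from the filtered colimit. -/
theorem hom_localization_eq_colimit (E F : PiSet ⥤ 𝔄) :
    (∀ (φ ψ : ℤ → ℤ) (hφ : inM φ) (hψ : inM ψ) (h : ∀ i, ψ i ≤ φ i)
        (u : tilde ψ hψ.1 E ⟶ F),
        theta E F φ hφ (canMap φ ψ hφ.1 hψ.1 h E ≫ u) = theta E F ψ hψ u) ∧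
    (∀ g : (Scl (𝔄 := 𝔄)).Q.obj E ⟶ (Scl (𝔄 := 𝔄)).Q.obj F,
        ∃ (φ : ℤ → ℤ) (hφ : inM φ) (u : tilde φ hφ.1 E ⟶ F), theta E F φ hφ u = g) ∧
    (∀ (φ ψ : ℤ → ℤ) (hφ : inM φ) (hψ : inM ψ) (u : tilde φ hφ.1 E ⟶ F)
        (v : tilde ψ hψ.1 E ⟶ F), theta E F φ hφ u = theta E F ψ hψ v →
        ∃ (χ : ℤ → ℤ) (hχ : inM χ) (h1 : ∀ i, φ i ≤ χ i) (h2 : ∀ i, ψ i ≤ χ i),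
          canMap χ φ hχ.1 hφ.1 h1 E ≫ u = canMap χ ψ hχ.1 hψ.1 h2 E ≫ v) :=
  ⟨fun _ _ => theta_canMap_comp E F, exists_theta_eq E F,
    fun _ _ => exists_canMap_comp_eq_of_theta_eq E F⟩
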